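/- arXiv:gr-qc/9806110 — 3 statements merged into one kernel-verified Lean document; each statement's English description precedes it below -/
import Mathlib

section
/- Let f(t,x,y,z) be smooth and suppose the pseudo-conformal coframe ϑ⁰ = e^{-f} dt, ϑⁱ = e^{f} dxⁱ satisfies the field equation □ϑᵃ = λϑᵃ for some function λ (where □ = d*d* + *d*d is the Hodge–de Rham Laplacian of the metric making the coframe orthonormal). Then either f_t = 0 identically, or f_x = f_y = f_z = 0 identically (on any connected region where one of the coupling terms f_t f_x, f_t f_y, f_t f_z together with f_{tx}+f_t f_x etc. is constrained to vanish). -/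
/-- Partial derivative of a function on ℝⁿ in the i-th coordinate direction. -/
noncomputable def pd {n : ℕ} (i : Fin n) (f : (Fin n → ℝ) → ℝ) (x : Fin n → ℝ) : ℝ :=
  deriv (fun s => f (Function.update x i s)) (x i)

lemma update_eq_affine {n : ℕ} (x : Fin n → ℝ) (i : Fin n) (s : ℝ) :
    Function.update x i s = x + (s - x i) • (Pi.single i 1 : Fin n → ℝ) := by
  funext j
  by_cases h : j = i
  · subst h; simp
  · simp [Function.update_of_ne h, Pi.single_eq_of_ne h]

lemma hasDerivAt_curve {n : ℕ} (f : (Fin n → ℝ) → ℝ) (hf : Differentiable ℝ f)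
    (x : Fin n → ℝ) (i : Fin n) (s : ℝ) :
    HasDerivAt (fun s => f (Function.update x i s))
      (fderiv ℝ f (Function.update x i s) (Pi.single i 1)) s := by
  have h1 : HasDerivAt (fun s : ℝ => x + (s - x i) • (Pi.single i 1 : Fin n → ℝ))
      (Pi.single i 1) s := by
    have := ((hasDerivAt_id s).sub_const (x i)).smul_const (Pi.single i 1 : Fin n → ℝ)
    simpa using this.const_add x
  have hfun : (Function.update x i : ℝ → Fin n → ℝ)
      = fun s : ℝ => x + (s - x i) • (Pi.single i 1 : Fin n → ℝ) := by
    funext t; exact update_eq_affine x i t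
  have h1' : HasDerivAt (Function.update x i : ℝ → Fin n → ℝ) (Pi.single i 1) s := by
    rw [hfun]; exact h1
  exact (hf (Function.update x i s)).hasFDerivAt.comp_hasDerivAt s h1'


lemma pd_eq_fderiv {n : ℕ} (f : (Fin n → ℝ) → ℝ) (hf : Differentiable ℝ f)
    (i : Fin n) (x : Fin n → ℝ) :
    pd i f x = fderiv ℝ f x (Pi.single i 1) := by
  have h := hasDerivAt_curve f hf x i (x i)
  rw [Function.update_eq_self] at h
  exact h.deriv

lemma pd_contDiff {n : ℕ} (f : (Fin n → ℝ) → ℝ) (hf : ContDiff ℝ (⊤ : ℕ∞) f) (i : Fin n) :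
    ContDiff ℝ (⊤ : ℕ∞) (pd i f) := by
  have : pd i f = fun x => fderiv ℝ f x (Pi.single i 1) :=
    funext fun x => pd_eq_fderiv f (hf.differentiable (by simp)) i x
  rw [this]
  exact (hf.fderiv_right (by simp)).clm_apply contDiff_const

lemma pd_zero_const {n : ℕ} (g : (Fin n → ℝ) → ℝ) (hg : Differentiable ℝ g)
    (i : Fin n) (h : ∀ x, pd i g x = 0) (x : Fin n → ℝ) (s : ℝ) :
    g (Function.update x i s) = g x := by
  have hd : ∀ t : ℝ, HasDerivAt (fun s => g (Function.update x i s)) 0 t := by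
    intro t
    have h1 := hasDerivAt_curve g hg x i t
    have h2 := pd_eq_fderiv g hg i (Function.update x i t)
    rw [h (Function.update x i t)] at h2
    rwa [← h2] at h1
  have := is_const_of_deriv_eq_zero (fun t => (hd t).differentiableAt)
    (fun t => (hd t).deriv) s (x i)
  simpa [Function.update_eq_self] using this

lemma pd_symm {n : ℕ} (f : (Fin n → ℝ) → ℝ) (hf : ContDiff ℝ (⊤ : ℕ∞) f)
    (i j : Fin n) (x : Fin n → ℝ) :
    pd i (pd j f) x = pd j (pd i f) x := by
  have hdf : Differentiable ℝ f := hf.differentiable (by simp)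
  have hf' : Differentiable ℝ (fderiv ℝ f) := (hf.fderiv_right (m := (⊤ : ℕ∞)) (by simp)).differentiable (by simp)
  have hsym := second_derivative_symmetric (f' := fderiv ℝ f)
    (f'' := fderiv ℝ (fderiv ℝ f) x) (fun y => (hdf y).hasFDerivAt) (hf' x).hasFDerivAt
  have key : ∀ a b : Fin n, pd a (pd b f) x
      = fderiv ℝ (fderiv ℝ f) x (Pi.single a 1) (Pi.single b 1) := by
    intro a b
    have hdb : Differentiable ℝ (pd b f) := (pd_contDiff f hf b).differentiable (by simp)
    rw [pd_eq_fderiv (pd b f) hdb a x]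
    have heq : pd b f = fun y => fderiv ℝ f y (Pi.single b 1) :=
      funext fun y => pd_eq_fderiv f hdf b y
    have hcomp : HasFDerivAt (fun y => fderiv ℝ f y (Pi.single b 1))
        ((ContinuousLinearMap.apply ℝ ℝ (Pi.single b 1)).comp
          (fderiv ℝ (fderiv ℝ f) x)) x :=
      ((ContinuousLinearMap.apply ℝ ℝ (Pi.single b 1)).hasFDerivAt.comp x
        (hf' x).hasFDerivAt : HasFDerivAt
          ((ContinuousLinearMap.apply ℝ ℝ (Pi.single b 1)) ∘ (fderiv ℝ f)) _ x)
    rw [heq, hcomp.fderiv]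
    rfl
  rw [key i j, key j i]
  exact hsym _ _

/-- if the pseudo-conformal coframe ϑ⁰ = e^{-f}dt, ϑⁱ = e^{f}dxⁱ satisfies
the field equation □ϑᵃ = λϑᵃ, then the off-diagonal components of the Hodge–de Rham
Laplacians, namely 4(f_{x̂t} + f_x̂ f_t) (from □ϑ⁰) and 4 f_t f_x̂ (from □ϑⁱ), must vanish
identically.  Consequently, on the connected region ℝ⁴, either f_t ≡ 0 (f static)
or f_x = f_y = f_z ≡ 0 (f homogeneous).  Here coordinate 0 is t, coordinates 1,2,3
are x,y,z. -/
theorem field_equation_dichotomy (f : (Fin 4 → ℝ) → ℝ) (hf : ContDiff ℝ (⊤ : ℕ∞) f)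
    (hoffdiag : ∀ x : Fin 4 → ℝ, ∀ i : Fin 3,
      4 * (pd 0 f x * pd i.succ f x) = 0 ∧
      4 * (pd 0 (pd i.succ f) x + pd i.succ f x * pd 0 f x) = 0) :
    (∀ x : Fin 4 → ℝ, pd 0 f x = 0) ∨
    (∀ x : Fin 4 → ℝ, ∀ i : Fin 3, pd i.succ f x = 0) := by
  have h1 : ∀ x, ∀ i : Fin 3, pd 0 f x * pd i.succ f x = 0 := by
    intro x i; have := (hoffdiag x i).1; linarith
  have h2 : ∀ x, ∀ i : Fin 3, pd 0 (pd i.succ f) x = 0 := by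
    intro x i
    have ha := (hoffdiag x i).2
    have hb : pd i.succ f x * pd 0 f x = 0 := by rw [mul_comm]; exact h1 x i
    linarith
  have h3 : ∀ x, ∀ i : Fin 3, pd i.succ (pd 0 f) x = 0 := fun x i =>
    (pd_symm f hf i.succ 0 x).trans (h2 x i)
  by_cases h : ∀ x, pd 0 f x = 0
  · exact Or.inl h
  · right
    push_neg at h
    obtain ⟨x₀, hx₀⟩ := h
    have hg0 : Differentiable ℝ (pd 0 f) := (pd_contDiff f hf 0).differentiable (by simp)
    have h3' : ∀ (x : Fin 4 → ℝ) (j : Fin 4), j ≠ 0 → pd j (pd 0 f) x = 0 := by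
      intro x j hj
      fin_cases j
      · exact absurd rfl hj
      · exact h3 x 0
      · exact h3 x 1
      · exact h3 x 2
    have hconst0 : ∀ (j : Fin 4), j ≠ 0 → ∀ x s,
        pd 0 f (Function.update x j s) = pd 0 f x := fun j hj x s =>
      pd_zero_const (pd 0 f) hg0 j (fun y => h3' y j hj) x s
    intro y i
    have hgi : Differentiable ℝ (pd i.succ f) := (pd_contDiff f hf i.succ).differentiable (by simp)
    set w := Function.update (Function.update (Function.update x₀ 1 (y 1)) 2 (y 2)) 3 (y 3)
      with hw
    have hw0 : pd 0 f w ≠ 0 := by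
      rw [hw, hconst0 3 (by decide), hconst0 2 (by decide), hconst0 1 (by decide)]
      exact hx₀
    have hwy : Function.update y 0 (x₀ 0) = w := by
      funext j
      fin_cases j <;> simp [hw, Function.update]
    have hyw : pd i.succ f y = pd i.succ f w := by
      rw [← hwy]
      exact (pd_zero_const (pd i.succ f) hgi 0 (fun z => h2 z i) y (x₀ 0)).symm
    have := h1 w i
    rcases mul_eq_zero.mp this with hc | hc
    · exact absurd hc hw0
    · rw [hyw]; exact hc
end

section
/- For the metric g₀₀ = e^{-2φ}, gᵢᵢ = −e^{2φ} with φ = φ(x,y,z) static, the covariant wave equation g^{μν}φ_{;μν} = 0 reduces to the flat 3D Laplace equation Δφ = φ_xx + φ_yy + φ_zz = 0. -/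
/-- Spatial part of a space-time point (t,x,y,z) ∈ ℝ⁴. -/
def sp (x : Fin 4 → ℝ) : Fin 3 → ℝ := fun i => x i.succ

lemma sp_update_succ (x : Fin 4 → ℝ) (i : Fin 3) (s : ℝ) :
    sp (Function.update x i.succ s) = Function.update (sp x) i s := by
  funext j
  simp [sp, Function.update_apply, Fin.succ_inj]

lemma sp_update_zero (x : Fin 4 → ℝ) (s : ℝ) :
    sp (Function.update x 0 s) = sp x := by
  funext j
  simp [sp, Function.update_apply, Fin.succ_ne_zero]

lemma pd_comp_sp (f : (Fin 3 → ℝ) → ℝ) (i : Fin 3) (x : Fin 4 → ℝ) :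
    pd i.succ (fun z => f (sp z)) x = pd i f (sp x) := by
  show deriv (fun s => f (sp (Function.update x i.succ s))) (x i.succ)
      = deriv (fun s => f (Function.update (sp x) i s)) (sp x i)
  rw [funext fun s => congrArg f (sp_update_succ x i s)]
  rfl

lemma pd_zero_comp_sp (f : (Fin 3 → ℝ) → ℝ) (x : Fin 4 → ℝ) :
    pd (0 : Fin 4) (fun z => f (sp z)) x = 0 := by
  unfold pd
  simp [sp_update_zero]

/-- for the metric g₀₀ = e^{-2φ}, gᵢᵢ = −e^{2φ} with φ = φ(x,y,z) static,
the covariant wave equation g^{μν}φ_{;μν} = 0, i.e. the vanishing of the Laplace–Beltrami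
expression (1/√|g|)∂_μ(√|g| g^{μν}∂_ν φ), reduces to the flat 3D Laplace equation Δφ = 0:
the expression equals −e^{-2φ}·Δφ (a nonvanishing multiple of Δφ), hence vanishes iff
Δφ = 0.  Here √|g| = e^{2φ}, g^{00} = e^{2φ}, g^{ii} = −e^{-2φ}. -/
theorem wave_equation_reduces_to_laplace (φ : (Fin 3 → ℝ) → ℝ) (hφ : ContDiff ℝ (⊤ : ℕ∞) φ)
    (ginv : (Fin 4 → ℝ) → Fin 4 → Fin 4 → ℝ)
    (hginv : ∀ x i j, ginv x i j = if i = j then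
      (if i = 0 then Real.exp (2 * φ (sp x)) else -Real.exp (-2 * φ (sp x))) else 0) :
    ∀ x : Fin 4 → ℝ,
      (Real.exp (2 * φ (sp x)))⁻¹ *
        ∑ μ : Fin 4, pd μ (fun y => Real.exp (2 * φ (sp y)) *
          ∑ ν : Fin 4, ginv y μ ν * pd ν (fun z => φ (sp z)) y) x =
        -Real.exp (-2 * φ (sp x)) * ∑ i : Fin 3, pd i (pd i φ) (sp x) ∧
      ((Real.exp (2 * φ (sp x)))⁻¹ *
        ∑ μ : Fin 4, pd μ (fun y => Real.exp (2 * φ (sp y)) *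
          ∑ ν : Fin 4, ginv y μ ν * pd ν (fun z => φ (sp z)) y) x = 0 ↔
        ∑ i : Fin 3, pd i (pd i φ) (sp x) = 0) := by
  intro x
  have key : ∑ μ : Fin 4, pd μ (fun y => Real.exp (2 * φ (sp y)) *
      ∑ ν : Fin 4, ginv y μ ν * pd ν (fun z => φ (sp z)) y) x
      = -∑ i : Fin 3, pd i (pd i φ) (sp x) := by
    rw [Fin.sum_univ_succ]
    have h0 : (fun y => Real.exp (2 * φ (sp y)) *
        ∑ ν : Fin 4, ginv y (0 : Fin 4) ν * pd ν (fun z => φ (sp z)) y)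
        = fun _ => (0 : ℝ) := by
      funext y
      rw [Fin.sum_univ_four]
      simp [hginv, pd_zero_comp_sp]
    have hs : ∀ i : Fin 3, (fun y => Real.exp (2 * φ (sp y)) *
        ∑ ν : Fin 4, ginv y i.succ ν * pd ν (fun z => φ (sp z)) y)
        = fun y => -(pd i φ (sp y)) := by
      intro i
      funext y
      have hsum2 : ∑ ν : Fin 4, ginv y i.succ ν * pd ν (fun z => φ (sp z)) y
          = ginv y i.succ i.succ * pd i.succ (fun z => φ (sp z)) y := by
        refine Finset.sum_eq_single_of_mem _ (Finset.mem_univ _) ?_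
        intro b _ hb
        rw [hginv, if_neg (Ne.symm hb), zero_mul]
      rw [hsum2, hginv, if_pos rfl, if_neg (Fin.succ_ne_zero i), pd_comp_sp]
      have e : Real.exp (2 * φ (sp y)) * Real.exp (-2 * φ (sp y)) = 1 := by
        rw [← Real.exp_add]; ring_nf; exact Real.exp_zero
      calc Real.exp (2 * φ (sp y)) * (-Real.exp (-2 * φ (sp y)) * pd i φ (sp y))
          = -((Real.exp (2 * φ (sp y)) * Real.exp (-2 * φ (sp y))) * pd i φ (sp y)) := by
            ring
        _ = -(pd i φ (sp y)) := by rw [e, one_mul]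
    have hpd0 : pd (0 : Fin 4) (fun y => Real.exp (2 * φ (sp y)) *
        ∑ ν : Fin 4, ginv y (0 : Fin 4) ν * pd ν (fun z => φ (sp z)) y) x = 0 := by
      rw [h0]
      unfold pd
      simp
    have hpds : ∀ i : Fin 3, pd i.succ (fun y => Real.exp (2 * φ (sp y)) *
        ∑ ν : Fin 4, ginv y i.succ ν * pd ν (fun z => φ (sp z)) y) x
        = -(pd i (pd i φ) (sp x)) := by
      intro i
      rw [hs i]
      show deriv (fun s => -(pd i φ (sp (Function.update x i.succ s)))) (x i.succ)
          = -(pd i (pd i φ) (sp x))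
      have h1 : (fun s => -(pd i φ (sp (Function.update x i.succ s))))
          = fun s => -(pd i φ (Function.update (sp x) i s)) := by
        funext s; rw [sp_update_succ]
      rw [h1, deriv.fun_neg]
      rfl
    rw [hpd0, zero_add]
    simp only [hpds]
    rw [Finset.sum_neg_distrib]
  have hexp : (Real.exp (2 * φ (sp x)))⁻¹ = Real.exp (-2 * φ (sp x)) := by
    rw [← Real.exp_neg]; ring_nf
  constructor
  · rw [key, hexp]; ring
  · rw [key, hexp]
    constructor
    · intro h
      have h2 : Real.exp (-2 * φ (sp x)) ≠ 0 := Real.exp_ne_zero _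
      have := mul_eq_zero.mp h
      rcases this with h' | h'
      · exact absurd h' h2
      · linarith [neg_eq_zero.mp h']
    · intro h; rw [h]; ring
end

section
/- The Newtonian potential of a ball: if ρ is a constant density on the ball B_R ⊂ ℝ³ of radius R centered at the origin, then for any point q with ‖q‖ > R, the integral f(q) = ∫_{B_R} ρ/‖q − p‖ dp equals M/‖q‖, where M = (4/3)πR³ρ is the total mass; moreover, for a spherical shell, the potential inside the cavity is constant (so the gravity field there vanishes). -/
/-!
By rotation invariance the potential of a shell at `q` depends only on `d = ‖q‖`, so we may put
`q = (d, 0)` in `ℝ × ℝ²`. The slice of the shell at height `z` is a planar annulus, on which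
`1 / √((d - z)² + ‖w‖²)` integrates in polar coordinates to `2π` times the difference of the
distances from `q` to the two circles bounding the slice. The remaining integral over `z` is
elementary: it is `(4/3)π(R₂³ - R₁³)/d` when `q` lies outside the shell and `2π(R₂² - R₁²)`,
independent of `d`, when `q` lies in the cavity.
-/

open MeasureTheory intervalIntegral Real Set Module WithLp

lemma integral_sub_id (c a b : ℝ) : ∫ z in a..b, (c - z) = c * (b - a) - (b ^ 2 - a ^ 2) / 2 := by
  simp [integral_sub intervalIntegrable_const intervalIntegral.intervalIntegrable_id, mul_comm]

lemma integral_id_sub (c a b : ℝ) : ∫ z in a..b, (z - c) = (b ^ 2 - a ^ 2) / 2 - c * (b - a) := by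
  simp [integral_sub intervalIntegral.intervalIntegrable_id intervalIntegrable_const, mul_comm]

lemma integral_sqrt_sq_add_sq_sub_mul {d r : ℝ} (hd : 0 < d) (hr : 0 ≤ r) (hdr : d ≠ r) :
    ∫ z in (-r)..r, √(d ^ 2 + r ^ 2 - 2 * d * z) = ((d + r) ^ 3 - |d - r| ^ 3) / (3 * d) := by
  have hpos : ∀ z ∈ uIcc (-r) r, 0 < d ^ 2 + r ^ 2 - 2 * d * z := by
    intro z hz
    rw [uIcc_of_le (by linarith)] at hz
    nlinarith [hz.2, sq_pos_of_ne_zero (sub_ne_zero.mpr hdr)]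
  have hderiv : ∀ z ∈ uIcc (-r) r, HasDerivAt (fun z ↦ -√(d ^ 2 + r ^ 2 - 2 * d * z) ^ 3 / (3 * d))
      (√(d ^ 2 + r ^ 2 - 2 * d * z)) z := by
    intro z hz
    have hlin : HasDerivAt (fun z ↦ d ^ 2 + r ^ 2 - 2 * d * z) (-(2 * d)) z := by
      simpa using ((hasDerivAt_id z).const_mul (2 * d)).const_sub (d ^ 2 + r ^ 2)
    refine ((((hlin.sqrt (hpos z hz).ne').fun_pow 3).neg).div_const (3 * d)).congr_deriv ?_
    have hs := (sqrt_pos.mpr (hpos z hz)).ne'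
    set s := √(d ^ 2 + r ^ 2 - 2 * d * z)
    field_simp
    ring
  rw [integral_eq_sub_of_hasDerivAt hderiv
    ((continuous_const.sub (continuous_const.mul continuous_id)).sqrt.intervalIntegrable _ _)]
  have hminus : d ^ 2 + r ^ 2 - 2 * d * r = (d - r) ^ 2 := by ring
  have hplus : d ^ 2 + r ^ 2 - 2 * d * -r = (d + r) ^ 2 := by ring
  rw [hminus, hplus, sqrt_sq_eq_abs, sqrt_sq (by linarith)]
  ring

lemma integral_mul_div_sqrt_sq_add_sq {c : ℝ} (hc : c ≠ 0) (a b : ℝ) :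
    ∫ t in a..b, t / √(c ^ 2 + t ^ 2) = √(c ^ 2 + b ^ 2) - √(c ^ 2 + a ^ 2) := by
  have hpos : ∀ t : ℝ, 0 < c ^ 2 + t ^ 2 := fun t ↦ by positivity
  have hcont : Continuous fun t : ℝ ↦ t / √(c ^ 2 + t ^ 2) :=
    continuous_id.div (continuous_const.add (continuous_id.pow 2)).sqrt
      fun t ↦ (sqrt_pos.mpr (hpos t)).ne'
  refine integral_eq_sub_of_hasDerivAt (f := fun t ↦ √(c ^ 2 + t ^ 2)) (fun t _ ↦ ?_)
    (hcont.intervalIntegrable _ _)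
  refine (((hasDerivAt_pow 2 t).const_add (c ^ 2)).sqrt (hpos t).ne').congr_deriv ?_
  have := (sqrt_pos.mpr (hpos t)).ne'
  field_simp
  norm_num

/-- The distance from the point `(d, 0, 0)` to the circle in which the plane `{x₀ = z}` meets the
sphere of radius `r` about the origin, or to the point `(z, 0, 0)` when the plane misses the
sphere. -/
noncomputable def sliceDist (d r z : ℝ) : ℝ := √((d - z) ^ 2 + max (r ^ 2 - z ^ 2) 0)

lemma continuous_sliceDist (d r : ℝ) : Continuous (sliceDist d r) := by
  unfold sliceDist
  fun_prop

lemma sliceDist_of_sq_le {d r z : ℝ} (h : r ^ 2 ≤ z ^ 2) : sliceDist d r z = |d - z| := by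
  rw [sliceDist, max_eq_right (by linarith), add_zero, sqrt_sq_eq_abs]

lemma integral_sliceDist {d r R : ℝ} (hd : 0 ≤ d) (hr : 0 ≤ r) (hrR : r ≤ R) :
    ∫ z in (-R)..R, sliceDist d r z = (∫ z in (-R)..(-r), (d - z)) +
      (∫ z in (-r)..r, √(d ^ 2 + r ^ 2 - 2 * d * z)) + ∫ z in r..R, |d - z| := by
  have hint : ∀ a b, IntervalIntegrable (sliceDist d r) volume a b :=
    fun a b ↦ (continuous_sliceDist d r).intervalIntegrable a b
  have hleft : ∫ z in (-R)..(-r), sliceDist d r z = ∫ z in (-R)..(-r), (d - z) := by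
    refine integral_congr fun z hz ↦ ?_
    rw [uIcc_of_le (by linarith)] at hz
    rw [sliceDist_of_sq_le (by nlinarith [hz.2]), abs_of_nonneg (by linarith [hz.2])]
  have hmid : ∫ z in (-r)..r, sliceDist d r z = ∫ z in (-r)..r, √(d ^ 2 + r ^ 2 - 2 * d * z) := by
    refine integral_congr fun z hz ↦ ?_
    rw [uIcc_of_le (by linarith)] at hz
    simp only [sliceDist]
    rw [max_eq_left (by nlinarith [hz.1, hz.2])]
    ring_nf
  have hright : ∫ z in r..R, sliceDist d r z = ∫ z in r..R, |d - z| := by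
    refine integral_congr fun z hz ↦ ?_
    rw [uIcc_of_le hrR] at hz
    exact sliceDist_of_sq_le (by nlinarith [hz.1])
  rw [← integral_add_adjacent_intervals (hint _ _) (hint _ _),
    ← integral_add_adjacent_intervals (hint (-R) _) (hint _ _), hleft, hmid, hright]

lemma integral_sliceDist_of_le_of_lt {d r R : ℝ} (hr : 0 ≤ r) (hrR : r ≤ R) (hRd : R < d) :
    ∫ z in (-R)..R, sliceDist d r z = 2 * d * R + 2 * r ^ 3 / (3 * d) := by
  have hd : 0 < d := by linarith
  have hfar : ∫ z in r..R, |d - z| = ∫ z in r..R, (d - z) := by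
    refine integral_congr fun z hz ↦ abs_of_nonneg ?_
    rw [uIcc_of_le hrR] at hz
    linarith [hz.2]
  rw [integral_sliceDist hd.le hr hrR, integral_sqrt_sq_add_sq_sub_mul hd hr (by linarith), hfar,
    integral_sub_id, integral_sub_id, abs_of_nonneg (by linarith : 0 ≤ d - r)]
  field_simp
  ring

lemma integral_sliceDist_of_lt_of_le {d r R : ℝ} (hd : 0 ≤ d) (hdr : d < r) (hrR : r ≤ R) :
    ∫ z in (-R)..R, sliceDist d r z = R ^ 2 + r ^ 2 + 2 / 3 * d ^ 2 := by
  have hfar : ∫ z in r..R, |d - z| = ∫ z in r..R, (z - d) := by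
    refine integral_congr fun z hz ↦ ?_
    rw [uIcc_of_le hrR] at hz
    rw [abs_of_nonpos (by linarith [hz.1]), neg_sub]
  have hcap : ∫ z in (-r)..r, √(d ^ 2 + r ^ 2 - 2 * d * z) = 2 * r ^ 2 + 2 / 3 * d ^ 2 := by
    rcases hd.eq_or_lt with rfl | hd
    · simp [sqrt_sq (hd.trans hdr.le)]
      ring
    · rw [integral_sqrt_sq_add_sq_sub_mul hd (hd.le.trans hdr.le) hdr.ne,
        abs_of_neg (by linarith : d - r < 0)]
      field_simp
      ring
  rw [integral_sliceDist hd (hd.trans hdr.le) hrR, hcap, hfar, integral_sub_id, integral_id_sub]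
  ring

def shell {E : Type*} [Norm E] (R₁ R₂ : ℝ) : Set E := {p | R₁ ≤ ‖p‖ ∧ ‖p‖ ≤ R₂}

section Shell

variable {E : Type*} [NormedAddCommGroup E]

lemma measurableSet_shell [MeasurableSpace E] [OpensMeasurableSpace E] (R₁ R₂ : ℝ) :
    MeasurableSet (shell R₁ R₂ : Set E) :=
  measurable_norm measurableSet_Icc

lemma isCompact_shell [ProperSpace E] (R₁ R₂ : ℝ) : IsCompact (shell R₁ R₂ : Set E) :=
  (isCompact_closedBall 0 R₂).of_isClosed_subset
    ((isClosed_le continuous_const continuous_norm).inter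
      (isClosed_le continuous_norm continuous_const))
    fun _ hp ↦ mem_closedBall_zero_iff.mpr hp.2

lemma integrableOn_shell_inv_norm_sub [ProperSpace E] [MeasurableSpace E] [OpensMeasurableSpace E]
    {μ : Measure E} [IsFiniteMeasureOnCompacts μ] {R₁ R₂ : ℝ} {q : E} (hq : q ∉ shell R₁ R₂) :
    IntegrableOn (fun p ↦ ‖q - p‖⁻¹) (shell R₁ R₂) μ :=
  (continuousOn_const.sub continuousOn_id).norm.inv₀
    (fun _ hp ↦ norm_ne_zero_iff.mpr (sub_ne_zero.mpr (ne_of_mem_of_not_mem hp hq).symm))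
    |>.integrableOn_compact (isCompact_shell R₁ R₂)

lemma norm_toLp_prod (z : ℝ) (w : E) : ‖toLp 2 (z, w)‖ = √(z ^ 2 + ‖w‖ ^ 2) := by
  simp [prod_norm_eq_of_L2]

lemma toLp_mem_shell_iff {R₁ R₂ z : ℝ} (hR₁ : 0 ≤ R₁) (hR₂ : 0 ≤ R₂) (hz : z ^ 2 ≤ R₂ ^ 2)
    (w : E) : toLp 2 (z, w) ∈ (shell R₁ R₂ : Set (WithLp 2 (ℝ × E))) ↔
      w ∈ (shell √(R₁ ^ 2 - z ^ 2) √(R₂ ^ 2 - z ^ 2) : Set E) := by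
  simp only [shell, mem_ofPred_eq, norm_toLp_prod,
    le_sqrt hR₁ (add_nonneg (sq_nonneg z) (sq_nonneg ‖w‖)), sqrt_le_left hR₂,
    sqrt_le_left (norm_nonneg w), le_sqrt (norm_nonneg w) (sub_nonneg.mpr hz)]
  constructor <;> rintro ⟨h₁, h₂⟩ <;> constructor <;> linarith

end Shell

section Isometry

variable {E F : Type*} [NormedAddCommGroup E] [InnerProductSpace ℝ E] [FiniteDimensional ℝ E]
  [NormedAddCommGroup F] [InnerProductSpace ℝ F] [FiniteDimensional ℝ F]

lemma exists_linearIsometryEquiv_apply_eq (h : finrank ℝ E = finrank ℝ F) {x : E} {y : F}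
    (hxy : ‖x‖ = ‖y‖) : ∃ φ : E ≃ₗᵢ[ℝ] F, φ x = y := by
  let ψ : E ≃ₗᵢ[ℝ] F := (stdOrthonormalBasis ℝ E).repr.trans
    ((stdOrthonormalBasis ℝ F).reindex (finCongr h.symm)).repr.symm
  refine ⟨ψ.trans (Submodule.reflection (ℝ ∙ (ψ x - y))ᗮ), ?_⟩
  simpa using Submodule.reflection_sub (by rw [ψ.norm_map, hxy] : ‖ψ x‖ = ‖y‖)

variable [MeasurableSpace E] [BorelSpace E] [MeasurableSpace F] [BorelSpace F]

lemma setIntegral_shell_comp_norm_sub_eq (h : finrank ℝ E = finrank ℝ F) (g : ℝ → ℝ)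
    (R₁ R₂ : ℝ) {x : E} {y : F} (hxy : ‖x‖ = ‖y‖) :
    ∫ p in (shell R₁ R₂ : Set E), g ‖x - p‖ = ∫ p in (shell R₁ R₂ : Set F), g ‖y - p‖ := by
  obtain ⟨φ, rfl⟩ := exists_linearIsometryEquiv_apply_eq h hxy
  have hpre : φ ⁻¹' shell R₁ R₂ = shell R₁ R₂ := by
    ext p
    simp [shell, φ.norm_map]
  rw [← φ.measurePreserving.setIntegral_preimage_emb φ.toHomeomorph.measurableEmbedding, hpre]
  simp_rw [← map_sub, φ.norm_map]

end Isometry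

section Plane

variable {W : Type*} [NormedAddCommGroup W] [InnerProductSpace ℝ W] [FiniteDimensional ℝ W]
  [MeasurableSpace W] [BorelSpace W]

lemma volume_real_ball_zero_one_of_finrank_eq_two (hW : finrank ℝ W = 2) :
    volume.real (Metric.ball (0 : W) 1) = π := by
  have : Nontrivial W := Module.nontrivial_of_finrank_eq_succ hW
  simp [measureReal_def, InnerProductSpace.volume_ball_of_dim_even (k := 1) hW, pi_nonneg]

lemma setIntegral_shell_fun_norm (hW : finrank ℝ W = 2) (g : ℝ → ℝ) {a₁ a₂ : ℝ} (ha₁ : 0 ≤ a₁)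
    (ha₁₂ : a₁ ≤ a₂) : ∫ w in (shell a₁ a₂ : Set W), g ‖w‖ = 2 * π * ∫ t in a₁..a₂, t * g t := by
  have : Nontrivial W := Module.nontrivial_of_finrank_eq_succ hW
  have hvanish : ∀ t ∉ Ioi (0 : ℝ), t ^ (finrank ℝ W - 1) • (Icc a₁ a₂).indicator g t = 0 := by
    intro t ht
    by_cases hmem : t ∈ Icc a₁ a₂
    · simp [hW, le_antisymm (not_lt.mp ht) (ha₁.trans hmem.1)]
    · simp [hmem]
  have hind : (shell a₁ a₂ : Set W).indicator (fun w ↦ g ‖w‖) =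
      fun w ↦ (Icc a₁ a₂).indicator g ‖w‖ :=
    funext fun w ↦ Set.indicator_comp_right (s := Icc a₁ a₂) norm
  have hmul : (fun t ↦ t * (Icc a₁ a₂).indicator g t) = (Icc a₁ a₂).indicator (fun t ↦ t * g t) :=
    funext fun t ↦ (Set.indicator_mul_right _ (fun t ↦ t) g).symm
  rw [← MeasureTheory.integral_indicator (measurableSet_shell a₁ a₂), hind,
    integral_fun_norm_addHaar volume, volume_real_ball_zero_one_of_finrank_eq_two hW,
    setIntegral_eq_integral_of_forall_compl_eq_zero hvanish]
  simp only [hW, nsmul_eq_mul, smul_eq_mul, Nat.reduceSub, pow_one]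
  rw [hmul, MeasureTheory.integral_indicator measurableSet_Icc, integral_Icc_eq_integral_Ioc,
    ← integral_of_le ha₁₂]
  push_cast
  ring

lemma setIntegral_shell_inv_sqrt (hW : finrank ℝ W = 2) {c : ℝ} (hc : c ≠ 0) {a₁ a₂ : ℝ}
    (ha₁ : 0 ≤ a₁) (ha₁₂ : a₁ ≤ a₂) :
    ∫ w in (shell a₁ a₂ : Set W), (√(c ^ 2 + ‖w‖ ^ 2))⁻¹ =
      2 * π * (√(c ^ 2 + a₂ ^ 2) - √(c ^ 2 + a₁ ^ 2)) := by
  rw [setIntegral_shell_fun_norm hW (fun t ↦ (√(c ^ 2 + t ^ 2))⁻¹) ha₁ ha₁₂]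
  simp_rw [← div_eq_mul_inv]
  rw [integral_mul_div_sqrt_sq_add_sq hc]

lemma integral_indicator_shell_inv_dist_slice (hW : finrank ℝ W = 2) {R₁ R₂ d z : ℝ}
    (hR₁ : 0 ≤ R₁) (hR₁₂ : R₁ ≤ R₂) (hzd : z ≠ d) :
    ∫ w : W, (shell R₁ R₂).indicator (fun x : WithLp 2 (ℝ × W) ↦ ‖toLp 2 (d, 0) - x‖⁻¹)
      (toLp 2 (z, w)) = 2 * π * (sliceDist d R₂ z - sliceDist d R₁ z) := by
  have hdist : ∀ w : W, ‖toLp 2 (d, (0 : W)) - toLp 2 (z, w)‖ = √((d - z) ^ 2 + ‖w‖ ^ 2) := by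
    intro w
    rw [← toLp_sub, Prod.mk_sub_mk, zero_sub, norm_toLp_prod, norm_neg]
  by_cases hz : z ^ 2 ≤ R₂ ^ 2
  · have hR₂ : 0 ≤ R₂ := hR₁.trans hR₁₂
    have hind : ∀ w : W,
        (shell R₁ R₂).indicator (fun x : WithLp 2 (ℝ × W) ↦ ‖toLp 2 (d, 0) - x‖⁻¹) (toLp 2 (z, w))
          = (shell √(R₁ ^ 2 - z ^ 2) √(R₂ ^ 2 - z ^ 2)).indicator
            (fun w ↦ (√((d - z) ^ 2 + ‖w‖ ^ 2))⁻¹) w := by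
      intro w
      by_cases hw : toLp 2 (z, w) ∈ (shell R₁ R₂ : Set (WithLp 2 (ℝ × W)))
      · rw [indicator_of_mem hw, indicator_of_mem ((toLp_mem_shell_iff hR₁ hR₂ hz w).mp hw),
          hdist]
      · rw [indicator_of_notMem hw,
          indicator_of_notMem (mt (toLp_mem_shell_iff hR₁ hR₂ hz w).mpr hw)]
    simp_rw [hind]
    rw [MeasureTheory.integral_indicator (measurableSet_shell _ _),
      setIntegral_shell_inv_sqrt hW (sub_ne_zero.mpr hzd.symm) (sqrt_nonneg _)
        (sqrt_le_sqrt (by nlinarith)), sq_sqrt', sq_sqrt', sliceDist, sliceDist]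
  · have hout : ∀ w : W, toLp 2 (z, w) ∉ (shell R₁ R₂ : Set (WithLp 2 (ℝ × W))) := by
      intro w hw
      have := hw.2
      rw [norm_toLp_prod, sqrt_le_left (hR₁.trans hR₁₂)] at this
      nlinarith [norm_nonneg w]
    simp only [indicator_of_notMem (hout _), MeasureTheory.integral_zero]
    rw [sliceDist_of_sq_le (by linarith), sliceDist_of_sq_le (by nlinarith), sub_self, mul_zero]

lemma setIntegral_shell_inv_dist_toLp (hW : finrank ℝ W = 2) {R₁ R₂ d : ℝ} (hR₁ : 0 ≤ R₁)
    (hR₁₂ : R₁ ≤ R₂) (hd : 0 ≤ d) (hdR : R₂ < d ∨ d < R₁) :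
    ∫ x in (shell R₁ R₂ : Set (WithLp 2 (ℝ × W))), ‖toLp 2 (d, 0) - x‖⁻¹ =
      2 * π * ∫ z in (-R₂)..R₂, (sliceDist d R₂ z - sliceDist d R₁ z) := by
  set f := fun x : WithLp 2 (ℝ × W) ↦ ‖toLp 2 (d, 0) - x‖⁻¹
  have hd_notMem : toLp 2 (d, (0 : W)) ∉ (shell R₁ R₂ : Set (WithLp 2 (ℝ × W))) := by
    simp only [shell, mem_ofPred_eq, norm_toLp_prod, norm_zero, sq, mul_zero, add_zero,
      sqrt_mul_self hd, not_and_or, not_le]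
    tauto
  have hmp := volume_preserving_toLp ℝ W
  have hemb := (MeasurableEquiv.toLp 2 (ℝ × W)).measurableEmbedding
  have hint : Integrable (fun zw : ℝ × W ↦ (shell R₁ R₂).indicator f (toLp 2 zw))
      (volume.prod volume) := by
    rw [← Measure.volume_eq_prod]
    refine (hmp.integrable_comp_emb hemb (g := (shell R₁ R₂).indicator f)).mpr ?_
    exact (integrable_indicator_iff (measurableSet_shell R₁ R₂)).mpr
      (integrableOn_shell_inv_norm_sub hd_notMem)
  have hslice : ∀ᵐ z : ℝ, ∫ w : W, (shell R₁ R₂).indicator f (toLp 2 (z, w)) =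
      2 * π * (sliceDist d R₂ z - sliceDist d R₁ z) :=
    (Measure.ae_ne volume d).mono fun z hz ↦
      integral_indicator_shell_inv_dist_slice hW hR₁ hR₁₂ hz
  have hsupp : ∀ z ∉ Ioc (-R₂) R₂, 2 * π * (sliceDist d R₂ z - sliceDist d R₁ z) = 0 := by
    intro z hz
    have hz2 : R₂ ^ 2 ≤ z ^ 2 := by
      simp only [mem_Ioc, not_and_or, not_lt, not_le] at hz
      rcases hz with hz | hz <;> nlinarith
    rw [sliceDist_of_sq_le hz2, sliceDist_of_sq_le (by nlinarith), sub_self, mul_zero]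
  rw [← MeasureTheory.integral_indicator (measurableSet_shell R₁ R₂),
    ← hmp.integral_comp hemb, Measure.volume_eq_prod, integral_prod _ hint,
    integral_congr_ae hslice, ← setIntegral_eq_integral_of_forall_compl_eq_zero hsupp,
    ← integral_of_le (by linarith), intervalIntegral.integral_const_mul]

end Plane

section Space

variable {E : Type*} [NormedAddCommGroup E] [InnerProductSpace ℝ E] [FiniteDimensional ℝ E]
  [MeasurableSpace E] [BorelSpace E]

lemma setIntegral_shell_inv_dist_eq_integral_sliceDist (hE : finrank ℝ E = 3) {R₁ R₂ : ℝ}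
    (hR₁ : 0 ≤ R₁) (hR₁₂ : R₁ ≤ R₂) {q : E} (hq : R₂ < ‖q‖ ∨ ‖q‖ < R₁) :
    ∫ p in (shell R₁ R₂ : Set E), ‖q - p‖⁻¹ =
      2 * π * ∫ z in (-R₂)..R₂, (sliceDist ‖q‖ R₂ z - sliceDist ‖q‖ R₁ z) := by
  have hV : finrank ℝ (WithLp 2 (ℝ × EuclideanSpace ℝ (Fin 2))) = 3 := by
    rw [(WithLp.linearEquiv 2 ℝ _).finrank_eq, Module.finrank_prod, finrank_self,
      finrank_euclideanSpace_fin]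
  rw [setIntegral_shell_comp_norm_sub_eq (g := fun t ↦ t⁻¹) (hE.trans hV.symm) R₁ R₂
    (y := toLp 2 (‖q‖, (0 : EuclideanSpace ℝ (Fin 2)))) (by rw [norm_toLp_fst, norm_norm])]
  exact setIntegral_shell_inv_dist_toLp finrank_euclideanSpace_fin hR₁ hR₁₂ (norm_nonneg q) hq

lemma setIntegral_shell_inv_dist_of_lt_norm (hE : finrank ℝ E = 3) {R₁ R₂ : ℝ} (hR₁ : 0 ≤ R₁)
    (hR₁₂ : R₁ ≤ R₂) {q : E} (hq : R₂ < ‖q‖) :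
    ∫ p in (shell R₁ R₂ : Set E), ‖q - p‖⁻¹ = 4 / 3 * π * (R₂ ^ 3 - R₁ ^ 3) / ‖q‖ := by
  have hq₀ : 0 < ‖q‖ := by linarith
  rw [setIntegral_shell_inv_dist_eq_integral_sliceDist hE hR₁ hR₁₂ (.inl hq),
    integral_sub ((continuous_sliceDist _ _).intervalIntegrable _ _)
      ((continuous_sliceDist _ _).intervalIntegrable _ _),
    integral_sliceDist_of_le_of_lt (hR₁.trans hR₁₂) le_rfl hq,
    integral_sliceDist_of_le_of_lt hR₁ hR₁₂ hq]
  field_simp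
  ring

lemma setIntegral_shell_inv_dist_of_norm_lt (hE : finrank ℝ E = 3) {R₁ R₂ : ℝ} (hR₁₂ : R₁ ≤ R₂)
    {q : E} (hq : ‖q‖ < R₁) :
    ∫ p in (shell R₁ R₂ : Set E), ‖q - p‖⁻¹ = 2 * π * (R₂ ^ 2 - R₁ ^ 2) := by
  have hR₁ : 0 ≤ R₁ := (norm_nonneg q).trans hq.le
  rw [setIntegral_shell_inv_dist_eq_integral_sliceDist hE hR₁ hR₁₂ (.inr hq),
    integral_sub ((continuous_sliceDist _ _).intervalIntegrable _ _)
      ((continuous_sliceDist _ _).intervalIntegrable _ _),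
    integral_sliceDist_of_lt_of_le (norm_nonneg q) (hq.trans_le hR₁₂) le_rfl,
    integral_sliceDist_of_lt_of_le (norm_nonneg q) hq hR₁₂]
  ring

end Space

theorem newtonian_potential_ball_and_shell_general (R ρ₀ : ℝ) (hR : 0 < R) :
    (∀ q : EuclideanSpace ℝ (Fin 3), R < ‖q‖ →
      (∫ p in Metric.closedBall (0 : EuclideanSpace ℝ (Fin 3)) R, ρ₀ / ‖q - p‖) =
        (ρ₀ * ((4 / 3) * Real.pi * R ^ 3)) / ‖q‖) ∧
    (∀ R₁ R₂ : ℝ, 0 < R₁ → R₁ ≤ R₂ →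
      ∀ q₁ q₂ : EuclideanSpace ℝ (Fin 3), ‖q₁‖ < R₁ → ‖q₂‖ < R₁ →
        (∫ p in {p : EuclideanSpace ℝ (Fin 3) | R₁ ≤ ‖p‖ ∧ ‖p‖ ≤ R₂}, ρ₀ / ‖q₁ - p‖) =
        (∫ p in {p : EuclideanSpace ℝ (Fin 3) | R₁ ≤ ‖p‖ ∧ ‖p‖ ≤ R₂}, ρ₀ / ‖q₂ - p‖)) := by
  have hE : finrank ℝ (EuclideanSpace ℝ (Fin 3)) = 3 := finrank_euclideanSpace_fin
  have hdensity : ∀ (q : EuclideanSpace ℝ (Fin 3)) (s : Set (EuclideanSpace ℝ (Fin 3))),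
      ∫ p in s, ρ₀ / ‖q - p‖ = ρ₀ * ∫ p in s, ‖q - p‖⁻¹ := fun q s ↦ by
    simp_rw [div_eq_mul_inv]
    exact integral_const_mul ρ₀ _
  refine ⟨fun q hq ↦ ?_, fun R₁ R₂ _ hR₁₂ q₁ q₂ hq₁ hq₂ ↦ ?_⟩
  · have hball : Metric.closedBall (0 : EuclideanSpace ℝ (Fin 3)) R = shell 0 R := by
      ext p
      simp [shell]
    rw [hball, hdensity, setIntegral_shell_inv_dist_of_lt_norm hE le_rfl hR.le hq]
    ring
  · change ∫ p in shell R₁ R₂, _ = ∫ p in shell R₁ R₂, _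
    rw [hdensity, hdensity, setIntegral_shell_inv_dist_of_norm_lt hE hR₁₂ hq₁,
      setIntegral_shell_inv_dist_of_norm_lt hE hR₁₂ hq₂]

/-- Newtonian potential of a ball and of a shell: for constant density
ρ₀ on the ball B_R ⊂ ℝ³, the potential f(q) = ∫_{B_R} ρ₀/‖q−p‖ dp equals M/‖q‖ for
‖q‖ > R, where M = ρ₀·(4/3)πR³ is the total mass; and for a spherical shell
{R₁ ≤ ‖p‖ ≤ R₂} the potential is constant inside the cavity ‖q‖ < R₁. -/
theorem newtonian_potential_ball_and_shell (R ρ₀ : ℝ) (hR : 0 < R) (hρ : 0 < ρ₀) :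
    (∀ q : EuclideanSpace ℝ (Fin 3), R < ‖q‖ →
      (∫ p in Metric.closedBall (0 : EuclideanSpace ℝ (Fin 3)) R, ρ₀ / ‖q - p‖) =
        (ρ₀ * ((4 / 3) * Real.pi * R ^ 3)) / ‖q‖) ∧
    (∀ R₁ R₂ : ℝ, 0 < R₁ → R₁ ≤ R₂ →
      ∀ q₁ q₂ : EuclideanSpace ℝ (Fin 3), ‖q₁‖ < R₁ → ‖q₂‖ < R₁ →
        (∫ p in {p : EuclideanSpace ℝ (Fin 3) | R₁ ≤ ‖p‖ ∧ ‖p‖ ≤ R₂}, ρ₀ / ‖q₁ - p‖) =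
        (∫ p in {p : EuclideanSpace ℝ (Fin 3) | R₁ ≤ ‖p‖ ∧ ‖p‖ ≤ R₂}, ρ₀ / ‖q₂ - p‖)) :=
  newtonian_potential_ball_and_shell_general R ρ₀ hR
end
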